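/- Assume the abstract reduced crossed product setup for an action α : Γ → Aut(A), with ambient C*-algebra B, unitaries (u_t), and conditional expectation E : B → A. Then the inclusion A ⊆ B has the relative Dixmier property (for every x ∈ B, the norm-closed convex hull in B of {v x v* : v a unitary element of A} intersects ℂ·1) if and only if A has the Dixmier property (for every a ∈ A, the norm-closed convex hull of {v a v* : v a unitary element of A} intersects ℂ·1) and the action α has (SAveP). -/

import Mathlib

/-!
Let `𝒜` be the convex hull of the maps `x ↦ v x v*`, `v` a unitary of `A`; it is a monoid of
contractions fixing the scalars, and `C_A(x)` is the closure of the orbit `𝒜 x`.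

(⇒) Conjugation by a unitary `v` of `A` sends `b u_t` to `v b α_t(v)* u_t`, so
`C_A(b u_t) = C_A^{α_t}(b) u_t`. A scalar `c` in `C_A(b u_t)` with `t ≠ e` therefore gives
`c u_t* ∈ C_A^{α_t}(b) ⊆ A`; applying `E`, which fixes `A` and kills `u_t*`, shows `c u_t* = 0`.

(⇐) Consider the `x` such that for every `S ∈ 𝒜` some `T ∈ 𝒜` moves `T S x` arbitrarily close
to `ℂ 1`. They form a closed subspace: for `x + y`, first push `S x` close to a scalar, then push
the image of `y` under the composite; this keeps the first approximation, as the elements of `𝒜`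
are contractions fixing the scalars. The subspace contains every `a u_t`: `𝒜` maps `A u_t` into
itself, and the Dixmier property (`t = e`) or (SAveP) (`t ≠ e`) approximates `b u_t` by scalars.
By density it is everything, and as `ℂ 1` is finite-dimensional, the closed bounded set `C_A(x)`
then meets `ℂ 1`.
-/

/-- For a unital C*-subalgebra `A` of `B`, a map `f` on `A`, and `b ∈ B`, the norm-closed
convex hull in `B` of `{v * b * star (f v) : v a unitary element of A}`.  For `f = id`
this is `C_A(b)`; for `f = β` an automorphism of `A` it is `C_A^β(b)`. -/
def relC {B : Type*} [NormedRing B] [StarRing B] [CStarRing B] [NormedAlgebra ℂ B]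
    [CompleteSpace B] [StarModule ℂ B]
    (A : StarSubalgebra ℂ B) (f : ↥A → ↥A) (b : B) : Set B :=
  closure (convexHull ℝ
    {y : B | ∃ v : ↥A, v ∈ unitary ↥A ∧ y = (v : B) * b * star ((f v : ↥A) : B)})

theorem convexHull_mul_mem {𝕜 R : Type*} [Field 𝕜] [LinearOrder 𝕜] [IsStrictOrderedRing 𝕜]
    [Ring R] [Module 𝕜 R] [IsScalarTower 𝕜 R R] [SMulCommClass 𝕜 R R] {s : Set R}
    (hs : ∀ x ∈ s, ∀ y ∈ s, x * y ∈ s) {x y : R} (hx : x ∈ convexHull 𝕜 s)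
    (hy : y ∈ convexHull 𝕜 s) : x * y ∈ convexHull 𝕜 s := by
  have hright : ∀ y ∈ s, ∀ x ∈ convexHull 𝕜 s, x * y ∈ convexHull 𝕜 s := fun y hy =>
    convexHull_min (fun x hx => subset_convexHull 𝕜 s (hs x hx y hy))
      ((convex_convexHull 𝕜 s).linear_preimage (LinearMap.mulRight 𝕜 y))
  exact convexHull_min (fun y hy => hright y hy x hx)
    ((convex_convexHull 𝕜 s).linear_preimage (LinearMap.mulLeft 𝕜 x)) hy

theorem IsClosed.inter_nonempty_of_forall_exists_dist_lt {X : Type*} [PseudoMetricSpace X]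
    {K L : Set X} (hK : IsClosed K) (hL : IsCompact L)
    (h : ∀ ε > 0, ∃ x ∈ K, ∃ y ∈ L, dist x y < ε) : (K ∩ L).Nonempty := by
  by_contra hKL
  obtain ⟨r, hr, hrL⟩ := Metric.exists_pos_forall_lt_edist hL hK
    (Set.disjoint_right.mpr fun x hxK hxL => hKL ⟨x, hxK, hxL⟩)
  obtain ⟨x, hxK, y, hyL, hxy⟩ := h r hr
  rw [← edist_lt_ofReal, ENNReal.ofReal_coe_nnreal, edist_comm] at hxy
  exact (hrL y hyL x hxK).not_gt hxy

theorem exists_smul_one_mem_of_forall_exists_norm_sub_lt {B : Type*} [NormedRing B]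
    [NormedAlgebra ℂ B] {K : Set B} {R : ℝ} (hK : IsClosed K) (hKR : K ⊆ Metric.closedBall 0 R)
    (h : ∀ ε > 0, ∃ y ∈ K, ∃ c : ℂ, ‖y - c • 1‖ < ε) : ∃ c : ℂ, c • (1 : B) ∈ K := by
  have := FiniteDimensional.proper_rclike ℂ (ℂ ∙ (1 : B))
  set L : Set B := (↑) '' Metric.closedBall (0 : ℂ ∙ (1 : B)) (R + 1)
  have hL : IsCompact L := (isCompact_closedBall _ _).image continuous_subtype_val
  have hKL : ∀ ε > 0, ∃ y ∈ K, ∃ z ∈ L, dist y z < ε := by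
    intro ε hε
    obtain ⟨y, hyK, c, hc⟩ := h (min ε 1) (by positivity)
    have hc1 : ‖c • (1 : B)‖ ≤ R + 1 :=
      calc ‖c • (1 : B)‖ ≤ ‖y‖ + ‖y - c • 1‖ := norm_le_norm_add_norm_sub _ _
        _ ≤ R + 1 := add_le_add (mem_closedBall_zero_iff.mp (hKR hyK))
          (hc.le.trans (min_le_right _ _))
    refine ⟨y, hyK, c • 1, ⟨⟨c • 1, Submodule.smul_mem _ c (Submodule.mem_span_singleton_self 1)⟩,
      mem_closedBall_zero_iff.mpr hc1, rfl⟩, ?_⟩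
    rw [dist_eq_norm]
    exact hc.trans_le (min_le_left _ _)
  obtain ⟨_, hzK, z, -, rfl⟩ := hK.inter_nonempty_of_forall_exists_dist_lt hL hKL
  obtain ⟨c, hc⟩ := Submodule.mem_span_singleton.mp z.2
  exact ⟨c, hc ▸ hzK⟩

instance {E : Type*} [NormedAddCommGroup E] [NormedSpace ℂ E] :
    IsScalarTower ℝ (E →L[ℂ] E) (E →L[ℂ] E) :=
  ⟨fun _ _ _ => ContinuousLinearMap.smul_comp _ _ _⟩

instance {E : Type*} [NormedAddCommGroup E] [NormedSpace ℂ E] :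
    SMulCommClass ℝ (E →L[ℂ] E) (E →L[ℂ] E) :=
  ⟨fun _ _ _ => by ext; simp⟩

section Averaging

variable {B : Type*} [NormedRing B] [StarRing B] [NormedAlgebra ℂ B] [StarModule ℂ B]
  {A : StarSubalgebra ℂ B}

theorem StarSubalgebra.coe_mem_unitary {v : A} (hv : v ∈ unitary A) : (v : B) ∈ unitary B :=
  Unitary.map_mem A.subtype hv

variable (A) in
def conjugationOps : Set (B →L[ℂ] B) :=
  {T | ∃ v : A, v ∈ unitary A ∧ T = ContinuousLinearMap.mulLeftRight ℂ B v (star (v : B))}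

theorem mul_mem_conjugationOps {S T : B →L[ℂ] B} (hS : S ∈ conjugationOps A)
    (hT : T ∈ conjugationOps A) : S * T ∈ conjugationOps A := by
  obtain ⟨v, hv, rfl⟩ := hS
  obtain ⟨w, hw, rfl⟩ := hT
  refine ⟨v * w, mul_mem hv hw, ?_⟩
  ext x
  simp [mul_assoc]

variable (A) in
def averagingOps : Submonoid (B →L[ℂ] B) where
  carrier := convexHull ℝ (conjugationOps A)
  mul_mem' := convexHull_mul_mem fun _ hS _ hT => mul_mem_conjugationOps hS hT
  one_mem' := subset_convexHull ℝ _ ⟨1, one_mem _, by ext; simp⟩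

theorem map_one_of_mem_averagingOps {T : B →L[ℂ] B} (hT : T ∈ averagingOps A) : T 1 = 1 := by
  refine convexHull_min ?_ ((convex_singleton (1 : B)).linear_preimage
    ((ContinuousLinearMap.apply ℂ B (1 : B)).toLinearMap.restrictScalars ℝ)) hT
  rintro _ ⟨v, hv, rfl⟩
  change (v : B) * 1 * star (v : B) = 1
  rw [mul_one, Unitary.mul_star_self_of_mem (A.coe_mem_unitary hv)]

theorem conj_mul_unitary_eq (w : unitary B) {β : A → A}
    (hβ : ∀ a : A, (β a : B) = w * a * star (w : B)) (v : A) (x : B) :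
    (v : B) * (x * w) * star (v : B) = (v : B) * x * star (β v : B) * w := by
  simp only [hβ, star_mul, star_star, mul_assoc, Unitary.star_mul_self_of_mem w.2, mul_one]

theorem exists_apply_mul_unitary_eq (w : unitary B) {β : A → A}
    (hβ : ∀ a : A, (β a : B) = w * a * star (w : B)) {T : B →L[ℂ] B} (hT : T ∈ averagingOps A)
    {a : B} (ha : a ∈ A) : ∃ b ∈ A, T (a * w) = b * w := by
  refine ⟨T (a * w) * star (w : B), ?_,
    by rw [mul_assoc, Unitary.star_mul_self_of_mem w.2, mul_one]⟩
  have hlin : IsLinearMap ℝ fun T : B →L[ℂ] B => T (a * w) * star (w : B) :=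
    ⟨fun _ _ => add_mul _ _ _, fun _ _ => smul_mul_assoc _ _ _⟩
  refine convexHull_min ?_ ((A.toSubmodule.restrictScalars ℝ).convex.is_linear_preimage hlin) hT
  rintro _ ⟨v, -, rfl⟩
  change (v : B) * (a * w) * star (v : B) * star (w : B) ∈ A
  rw [conj_mul_unitary_eq w hβ, mul_assoc _ (w : B), Unitary.mul_star_self_of_mem w.2, mul_one]
  exact mul_mem (mul_mem v.2 ha) (star_mem (β v).2)

variable [CStarRing B]

theorem norm_le_one_of_mem_averagingOps {T : B →L[ℂ] B} (hT : T ∈ averagingOps A) : ‖T‖ ≤ 1 := by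
  refine mem_closedBall_zero_iff.mp <| convexHull_min ?_ (convex_closedBall 0 1) hT
  rintro _ ⟨v, hv, rfl⟩
  have hv' := A.coe_mem_unitary hv
  refine mem_closedBall_zero_iff.mpr <|
    ContinuousLinearMap.opNorm_le_bound _ zero_le_one fun x => ?_
  rw [ContinuousLinearMap.mulLeftRight_apply,
    CStarRing.norm_mul_mem_unitary _ (Unitary.star_mem hv'), CStarRing.norm_mem_unitary_mul _ hv',
    one_mul]

theorem norm_apply_le_of_mem_averagingOps {T : B →L[ℂ] B} (hT : T ∈ averagingOps A) (x : B) :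
    ‖T x‖ ≤ ‖x‖ :=
  T.le_of_opNorm_le (norm_le_one_of_mem_averagingOps hT) x |>.trans_eq (one_mul _)

variable (A) in
def dixmierSubmodule : Submodule ℂ B where
  carrier := {x | ∀ S ∈ averagingOps A, ∀ ε > 0,
    ∃ T ∈ averagingOps A, ∃ c : ℂ, ‖T (S x) - c • 1‖ < ε}
  zero_mem' S _ ε hε := ⟨1, one_mem _, 0, by simpa using hε⟩
  add_mem' {x y} hx hy S hS ε hε := by
    obtain ⟨T₁, hT₁, c₁, h₁⟩ := hx S hS (ε / 2) (half_pos hε)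
    obtain ⟨T₂, hT₂, c₂, h₂⟩ := hy (T₁ * S) (mul_mem hT₁ hS) (ε / 2) (half_pos hε)
    refine ⟨T₂ * T₁, mul_mem hT₂ hT₁, c₁ + c₂, ?_⟩
    have hsplit : (T₂ * T₁) (S (x + y)) - (c₁ + c₂) • 1 =
        T₂ (T₁ (S x) - c₁ • 1) + ((T₂ * (T₁ * S)) y - c₂ • 1) := by
      simp only [map_add, map_sub, map_smul, map_one_of_mem_averagingOps hT₂,
        mul_apply_eq_comp, add_smul]
      abel
    calc ‖(T₂ * T₁) (S (x + y)) - (c₁ + c₂) • 1‖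
        ≤ ‖T₁ (S x) - c₁ • 1‖ + ‖(T₂ * (T₁ * S)) y - c₂ • 1‖ := by
          rw [hsplit]
          exact (norm_add_le _ _).trans
            (add_le_add_left (norm_apply_le_of_mem_averagingOps hT₂ _) _)
      _ < ε / 2 + ε / 2 := add_lt_add h₁ h₂
      _ = ε := add_halves ε
  smul_mem' c x hx S hS ε hε := by
    obtain ⟨T, hT, c', h⟩ := hx S hS (ε / (‖c‖ + 1)) (by positivity)
    refine ⟨T, hT, c * c', ?_⟩
    rw [map_smul, map_smul, mul_smul, ← smul_sub, norm_smul]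
    calc ‖c‖ * ‖T (S x) - c' • 1‖ ≤ ‖c‖ * (ε / (‖c‖ + 1)) := by gcongr
      _ < ε := by
        rw [mul_div_assoc', div_lt_iff₀ (by positivity)]
        nlinarith [norm_nonneg c]

theorem isClosed_dixmierSubmodule : IsClosed (dixmierSubmodule A : Set B) := by
  refine isClosed_of_closure_subset fun x hx S hS ε hε => ?_
  obtain ⟨x', hx', hxx'⟩ := Metric.mem_closure_iff.mp hx (ε / 2) (half_pos hε)
  obtain ⟨T, hT, c, hc⟩ := hx' S hS (ε / 2) (half_pos hε)
  refine ⟨T, hT, c, ?_⟩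
  have hTS : ‖T (S x) - T (S x')‖ ≤ ‖x - x'‖ := by
    rw [← map_sub, ← map_sub]
    exact norm_apply_le_of_mem_averagingOps (mul_mem hT hS) _
  calc ‖T (S x) - c • 1‖ ≤ ‖T (S x) - T (S x')‖ + ‖T (S x') - c • 1‖ :=
        norm_sub_le_norm_sub_add_norm_sub _ _ _
    _ < ε / 2 + ε / 2 := add_lt_add_of_le_of_lt (hTS.trans (dist_eq_norm x x' ▸ hxx'.le)) hc
    _ = ε := add_halves ε

theorem dixmierSubmodule_eq_top {s : Set B} (hs : Dense (Submodule.span ℂ s : Set B))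
    (hsA : s ⊆ dixmierSubmodule A) : dixmierSubmodule A = ⊤ :=
  Submodule.eq_top_iff'.mpr fun x => closure_minimal (Submodule.span_le.mpr hsA)
    isClosed_dixmierSubmodule (hs.closure_eq ▸ Set.mem_univ x)

variable [CompleteSpace B]

theorem relC_id_eq_closure_image (x : B) :
    relC A id x = closure ((fun T : B →L[ℂ] B => T x) '' averagingOps A) := by
  have heval : IsLinearMap ℝ fun T : B →L[ℂ] B => T x := ⟨fun _ _ => rfl, fun _ _ => rfl⟩
  rw [relC, averagingOps, Submonoid.coe_set_mk, Subsemigroup.coe_set_mk, heval.image_convexHull]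
  congr 2
  ext y
  simp [conjugationOps, eq_comm]

theorem relC_id_subset_closedBall (x : B) : relC A id x ⊆ Metric.closedBall 0 ‖x‖ := by
  rw [relC_id_eq_closure_image]
  refine closure_minimal ?_ Metric.isClosed_closedBall
  rintro _ ⟨T, hT, rfl⟩
  exact mem_closedBall_zero_iff.mpr (norm_apply_le_of_mem_averagingOps hT x)

theorem relC_subset (hA : IsClosed (A : Set B)) (f : A → A) {b : B} (hb : b ∈ A) :
    relC A f b ⊆ A := by
  refine closure_minimal (convexHull_min ?_ (A.toSubmodule.restrictScalars ℝ).convex) hA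
  rintro _ ⟨v, -, rfl⟩
  exact mul_mem (mul_mem v.2 hb) (star_mem (f v).2)

theorem relC_id_mul_unitary_eq (w : unitary B) {β : A → A}
    (hβ : ∀ a : A, (β a : B) = w * a * star (w : B)) (b : A) :
    relC A id (b * w) = (· * (w : B)) '' relC A β b := by
  have hlin : IsLinearMap ℝ (· * (w : B)) :=
    ⟨fun _ _ => add_mul _ _ _, fun _ _ => smul_mul_assoc _ _ _⟩
  calc relC A id (b * w)
      = closure ((· * (w : B)) '' convexHull ℝ
          {y | ∃ v : A, v ∈ unitary A ∧ y = (v : B) * b * star (β v : B)}) := by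
        rw [relC, hlin.image_convexHull]
        congr 2
        ext y
        constructor
        · rintro ⟨v, hv, rfl⟩
          exact ⟨_, ⟨v, hv, rfl⟩, (conj_mul_unitary_eq w hβ v b).symm⟩
        · rintro ⟨_, ⟨v, hv, rfl⟩, rfl⟩
          exact ⟨v, hv, (conj_mul_unitary_eq w hβ v b).symm⟩
    _ = (· * (w : B)) '' relC A β b := ((Unitary.mulRight ℝ w).toHomeomorph.image_closure _).symm

theorem zero_mem_relC_of_smul_one_mem (w : unitary B) {β : A → A}
    (hβ : ∀ a : A, (β a : B) = w * a * star (w : B)) (hA : IsClosed (A : Set B))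
    (E : B →ₗ[ℂ] B) (hE : ∀ a ∈ A, E a = a) (hEw : E (star w) = 0) {b : A} {c : ℂ}
    (hc : c • 1 ∈ relC A id (b * w)) : (0 : B) ∈ relC A β b := by
  rw [relC_id_mul_unitary_eq w hβ] at hc
  obtain ⟨y, hy, hyc : y * (w : B) = c • 1⟩ := hc
  have hy_eq : y = c • star (w : B) := by
    rw [← mul_one y, ← Unitary.mul_star_self_of_mem w.2, ← mul_assoc, hyc, smul_one_mul]
  have hy_zero : y = 0 := by
    rw [← hE y (relC_subset hA β b.2 hy), hy_eq, map_smul, hEw, smul_zero]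
  exact hy_zero ▸ hy

theorem mem_dixmierSubmodule_of_forall {x : B}
    (h : ∀ S ∈ averagingOps A, ∃ c : ℂ, c • 1 ∈ relC A id (S x)) : x ∈ dixmierSubmodule A := by
  intro S hS ε hε
  obtain ⟨c, hc⟩ := h S hS
  rw [relC_id_eq_closure_image, Metric.mem_closure_iff] at hc
  obtain ⟨_, ⟨T, hT, rfl⟩, hTc⟩ := hc ε hε
  exact ⟨T, hT, c, by rwa [dist_comm, dist_eq_norm] at hTc⟩

theorem mul_unitary_mem_dixmierSubmodule (w : unitary B) {β : A → A}
    (hβ : ∀ a : A, (β a : B) = w * a * star (w : B))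
    (h : ∀ b ∈ A, ∃ c : ℂ, c • 1 ∈ relC A id (b * w)) {a : B} (ha : a ∈ A) :
    a * w ∈ dixmierSubmodule A := by
  refine mem_dixmierSubmodule_of_forall fun S hS => ?_
  obtain ⟨b, hb, hSb⟩ := exists_apply_mul_unitary_eq w hβ hS ha
  exact hSb ▸ h b hb

theorem exists_smul_one_mem_relC_of_mem_dixmierSubmodule {x : B}
    (hx : x ∈ dixmierSubmodule A) : ∃ c : ℂ, c • 1 ∈ relC A id x := by
  refine exists_smul_one_mem_of_forall_exists_norm_sub_lt isClosed_closure
    (relC_id_subset_closedBall x) fun ε hε => ?_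
  obtain ⟨T, hT, c, hc⟩ := hx 1 (one_mem _) ε hε
  refine ⟨T x, ?_, c, hc⟩
  rw [relC_id_eq_closure_image]
  exact subset_closure ⟨T, hT, rfl⟩

end Averaging

theorem relative_dixmier_iff_dixmier_and_saveP_general
    {B : Type*} [NormedRing B] [StarRing B] [CStarRing B] [NormedAlgebra ℂ B]
    [CompleteSpace B] [StarModule ℂ B]
    {Γ : Type*} [Group Γ]
    (A : StarSubalgebra ℂ B) (hA : IsClosed (A : Set B))
    (u : Γ →* unitary B)
    (α : Γ → (↥A ≃⋆ₐ[ℂ] ↥A))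
    (hαu : ∀ (t : Γ) (a : ↥A), ((α t a : ↥A) : B) = (u t : B) * (a : B) * star (u t : B))
    (hdense : Dense (↑(Submodule.span ℂ
      {x : B | ∃ a ∈ A, ∃ t : Γ, x = a * (u t : B)}) : Set B))
    (E : B →L[ℂ] B)
    (hEe : ∀ a ∈ A, E (a * (u 1 : B)) = a)
    (hEt : ∀ a ∈ A, ∀ t : Γ, t ≠ 1 → E (a * (u t : B)) = 0) :
    (∀ x : B, ∃ c : ℂ, c • (1 : B) ∈ relC A id x) ↔
      ((∀ a ∈ A, ∃ c : ℂ, c • (1 : B) ∈ relC A id a) ∧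
        (∀ t : Γ, t ≠ 1 → ∀ b ∈ A, (0 : B) ∈ relC A (⇑(α t)) b)) := by
  constructor
  · refine fun H => ⟨fun a _ => H a, fun t ht b hb => ?_⟩
    have hE : ∀ a ∈ A, E a = a := fun a ha => by simpa using hEe a ha
    have hEstar : E (star (u t : B)) = 0 := by
      rw [← Unitary.coe_star, Unitary.star_eq_inv, ← map_inv]
      simpa using hEt 1 (one_mem A) t⁻¹ (inv_ne_one.mpr ht)
    obtain ⟨c, hc⟩ := H (b * u t)
    exact zero_mem_relC_of_smul_one_mem (u t) (hαu t) hA E hE hEstar (b := ⟨b, hb⟩) hc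
  · rintro ⟨hdix, hsav⟩ x
    have hgen : ∀ t, ∀ b ∈ A, ∃ c : ℂ, c • 1 ∈ relC A id (b * u t) := by
      intro t b hb
      rcases eq_or_ne t 1 with rfl | ht
      · simpa using hdix b hb
      · refine ⟨0, ?_⟩
        rw [zero_smul, relC_id_mul_unitary_eq (u t) (hαu t) ⟨b, hb⟩]
        exact ⟨0, hsav t ht b hb, zero_mul _⟩
    refine exists_smul_one_mem_relC_of_mem_dixmierSubmodule ?_
    rw [dixmierSubmodule_eq_top hdense]
    · trivial
    · rintro _ ⟨a, ha, t, rfl⟩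
      exact mul_unitary_mem_dixmierSubmodule (u t) (hαu t) (hgen t) ha

/-- Corollary 3.3: in the abstract reduced crossed product setup for an action
`α : Γ → Aut(A)`, the inclusion `A ⊆ B` has the relative Dixmier property if and only if
`A` has the Dixmier property and the action `α` has (SAveP). -/
theorem relative_dixmier_iff_dixmier_and_saveP
    {B : Type*} [NormedRing B] [StarRing B] [CStarRing B] [NormedAlgebra ℂ B]
    [CompleteSpace B] [StarModule ℂ B]
    {Γ : Type*} [Group Γ]
    (A : StarSubalgebra ℂ B) (hA : IsClosed (A : Set B))
    (u : Γ →* unitary B)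
    (α : Γ → (↥A ≃⋆ₐ[ℂ] ↥A))
    (hαu : ∀ (t : Γ) (a : ↥A), ((α t a : ↥A) : B) = (u t : B) * (a : B) * star (u t : B))
    (hdense : Dense (↑(Submodule.span ℂ
      {x : B | ∃ a ∈ A, ∃ t : Γ, x = a * (u t : B)}) : Set B))
    (E : B →L[ℂ] B) (hEmem : ∀ x : B, E x ∈ A) (hEnorm : ‖E‖ ≤ 1)
    (hEe : ∀ a ∈ A, E (a * (u 1 : B)) = a)
    (hEt : ∀ a ∈ A, ∀ t : Γ, t ≠ 1 → E (a * (u t : B)) = 0) :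
    (∀ x : B, ∃ c : ℂ, c • (1 : B) ∈ relC A id x) ↔
      ((∀ a ∈ A, ∃ c : ℂ, c • (1 : B) ∈ relC A id a) ∧
        (∀ t : Γ, t ≠ 1 → ∀ b ∈ A, (0 : B) ∈ relC A (⇑(α t)) b)) :=
  relative_dixmier_iff_dixmier_and_saveP_general A hA u α hαu hdense E hEe hEt
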